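/- arXiv:2109.10456 — 6 statements merged into one kernel-verified Lean document; each statement's English description precedes it below -/
import Mathlib

section
/- Let x₊ be a differentiable function on [t₀, T) with x₊'(t) > f(t, x₊(t)) for all t (a strict supersolution), and let x be a solution of x' = f(t,x) on [t₀, T) with x(t₀) ≤ x₊(t₀). Then x(t) < x₊(t) for all t ∈ (t₀, T). -/
open Set Filter Topology

/-- Strict comparison with a strict supersolution: if x₊' > f(t,x₊) and x solves
x' = f(t,x) with x(t₀) ≤ x₊(t₀), then x < x₊ on (t₀, T). -/
theorem stmt3 (f : ℝ → ℝ → ℝ) (t₀ T : ℝ) (hT : t₀ < T)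
    (x xp d : ℝ → ℝ)
    (hx : ∀ t ∈ Set.Ico t₀ T, HasDerivWithinAt x (f t (x t)) (Set.Ico t₀ T) t)
    (hxp : ∀ t ∈ Set.Ico t₀ T,
      HasDerivWithinAt xp (d t) (Set.Ico t₀ T) t ∧ f t (xp t) < d t)
    (h0 : x t₀ ≤ xp t₀) :
    ∀ t ∈ Set.Ioo t₀ T, x t < xp t := by
  have memIci : ∀ t ∈ Set.Ico t₀ T, Set.Ico t₀ T ∈ 𝓝[Set.Ici t] t := by
    intro t ht
    have h1 : Set.Iio T ∈ 𝓝[Set.Ici t] t :=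
      mem_nhdsWithin_of_mem_nhds (Iio_mem_nhds ht.2)
    filter_upwards [h1, self_mem_nhdsWithin] with z hz1 hz2
    exact ⟨le_trans ht.1 hz2, hz1⟩
  -- Non-strict comparison on all of [t₀, T)
  have hle : ∀ t ∈ Set.Ico t₀ T, x t ≤ xp t := by
    intro t ht
    rcases eq_or_lt_of_le ht.1 with rfl | hlt
    · exact h0
    · have hsub : Set.Icc t₀ t ⊆ Set.Ico t₀ T := fun s hs => ⟨hs.1, lt_of_le_of_lt hs.2 ht.2⟩
      have hsub' : Set.Ico t₀ t ⊆ Set.Ico t₀ T := fun s hs => ⟨hs.1, lt_trans hs.2 ht.2⟩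
      have key := image_le_of_deriv_right_lt_deriv_boundary'
        (f := x) (f' := fun s => f s (x s)) (a := t₀) (b := t) (B := xp) (B' := d)
        (fun s hs => ((hx s (hsub hs)).continuousWithinAt).mono hsub)
        (fun s hs => (hx s (hsub' hs)).mono_of_mem_nhdsWithin (memIci s (hsub' hs)))
        h0
        (fun s hs => ((hxp s (hsub hs)).1.continuousWithinAt).mono hsub)
        (fun s hs => ((hxp s (hsub' hs)).1).mono_of_mem_nhdsWithin (memIci s (hsub' hs)))
        (fun s hs heq => by simpa only [heq] using (hxp s (hsub' hs)).2)
      exact key ⟨ht.1, le_refl t⟩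
  -- Strict comparison on (t₀, T)
  intro t ht
  have htIco : t ∈ Set.Ico t₀ T := ⟨le_of_lt ht.1, ht.2⟩
  rcases lt_or_eq_of_le (hle t htIco) with h | heq
  · exact h
  exfalso
  set g : ℝ → ℝ := fun s => xp s - x s with hg_def
  have hg : HasDerivWithinAt g (d t - f t (x t)) (Set.Ico t₀ T) t :=
    (hxp t htIco).1.sub (hx t htIco)
  have hpos : 0 < d t - f t (x t) := by
    rw [heq]
    linarith [(hxp t htIco).2]
  have hslope := hasDerivWithinAt_iff_tendsto_slope.1 hg
  have hev : ∀ᶠ z in 𝓝[Set.Ico t₀ T \ {t}] t, 0 < slope g t z :=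
    hslope.eventually (eventually_gt_nhds hpos)
  have hsub2 : Set.Ioo t₀ t ⊆ Set.Ico t₀ T \ {t} := fun z hz =>
    ⟨⟨le_of_lt hz.1, lt_trans hz.2 ht.2⟩, ne_of_lt hz.2⟩
  have hev' : ∀ᶠ z in 𝓝[Set.Ioo t₀ t] t, 0 < slope g t z :=
    (nhdsWithin_mono t hsub2) hev
  have : NeBot (𝓝[Set.Ioo t₀ t] t) := right_nhdsWithin_Ioo_neBot ht.1
  obtain ⟨z, hzmem, hz⟩ := (eventually_mem_nhdsWithin.and hev').exists
  -- but the slope from the left is nonpositive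
  have hgz : 0 ≤ g z := by
    have := hle z ⟨le_of_lt hzmem.1, lt_trans hzmem.2 ht.2⟩
    simp [hg_def]; linarith
  have hgt : g t = 0 := by simp [hg_def, heq]
  have : slope g t z ≤ 0 := by
    rw [slope_def_field]
    apply div_nonpos_of_nonneg_of_nonpos
    · rw [hgt]; linarith
    · linarith [hzmem.2]
  linarith
end

section
/- For n ≥ 3, the function v₊(r) = r/√((n-1)(n-2)) is a strict supersolution and v₋(r) = r/√(n(n-1)) is a strict subsolution of the scalar curvature translator ODE v' = (1+v²) · (1 - (n-1)(n-2)(v/r)²) / (2(n-1) v/r) for r > 0. -/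
/-- v₊(r)=r/√((n-1)(n-2)) is a strict supersolution and v₋(r)=r/√(n(n-1)) a strict
subsolution of the scalar curvature translator ODE. -/
theorem stmt9 (n : ℕ) (hn : 3 ≤ n) (r : ℝ) (hr : 0 < r) :
    (1 / Real.sqrt (((n : ℝ) - 1) * ((n : ℝ) - 2)) >
      (1 + (r / Real.sqrt (((n : ℝ) - 1) * ((n : ℝ) - 2))) ^ 2) *
        ((1 - ((n : ℝ) - 1) * ((n : ℝ) - 2) *
            ((r / Real.sqrt (((n : ℝ) - 1) * ((n : ℝ) - 2))) / r) ^ 2) /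
          (2 * ((n : ℝ) - 1) * ((r / Real.sqrt (((n : ℝ) - 1) * ((n : ℝ) - 2))) / r)))) ∧
    (1 / Real.sqrt ((n : ℝ) * ((n : ℝ) - 1)) <
      (1 + (r / Real.sqrt ((n : ℝ) * ((n : ℝ) - 1))) ^ 2) *
        ((1 - ((n : ℝ) - 1) * ((n : ℝ) - 2) *
            ((r / Real.sqrt ((n : ℝ) * ((n : ℝ) - 1))) / r) ^ 2) /
          (2 * ((n : ℝ) - 1) * ((r / Real.sqrt ((n : ℝ) * ((n : ℝ) - 1))) / r)))) := by
  have hn3 : (3 : ℝ) ≤ (n : ℝ) := by exact_mod_cast hn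
  have h1 : (0 : ℝ) < (n : ℝ) - 1 := by linarith
  have h2 : (0 : ℝ) < (n : ℝ) - 2 := by linarith
  have hn0 : (0 : ℝ) < (n : ℝ) := by linarith
  set a := Real.sqrt (((n : ℝ) - 1) * ((n : ℝ) - 2)) with ha
  set b := Real.sqrt ((n : ℝ) * ((n : ℝ) - 1)) with hb
  have hapos : 0 < a := Real.sqrt_pos.mpr (by positivity)
  have hbpos : 0 < b := Real.sqrt_pos.mpr (by positivity)
  have ha2 : a ^ 2 = ((n : ℝ) - 1) * ((n : ℝ) - 2) :=
    Real.sq_sqrt (by positivity)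
  have hb2 : b ^ 2 = (n : ℝ) * ((n : ℝ) - 1) :=
    Real.sq_sqrt (by positivity)
  constructor
  · have hra : (r / a) / r = 1 / a := by
      field_simp
    rw [hra]
    have hnum : 1 - ((n : ℝ) - 1) * ((n : ℝ) - 2) * (1 / a) ^ 2 = 0 := by
      field_simp; ring_nf
      nlinarith [ha2]
    rw [hnum]
    have : (0:ℝ) / (2 * ((n : ℝ) - 1) * (1 / a)) = 0 := by simp
    rw [this, mul_zero]
    positivity
  · have hrb : (r / b) / r = 1 / b := by
      field_simp
    rw [hrb]
    have key : (1 - ((n : ℝ) - 1) * ((n : ℝ) - 2) * (1 / b) ^ 2) /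
        (2 * ((n : ℝ) - 1) * (1 / b)) = 1 / b := by
      rw [div_eq_iff (by positivity)]
      field_simp; ring_nf
      nlinarith [hb2]
    rw [key]
    have hv : 0 < (r / b) ^ 2 := by positivity
    have : 1 / b < (1 + (r / b) ^ 2) * (1 / b) := by
      nlinarith [one_div_pos.mpr hbpos]
    linarith
end

section
/- Let n ≥ 1, α > 0, and consider the Gauss curvature power translator ODE v' = r^{n-1} (1+v²)^{(n+2)/2 - n/(2α)} / v^{n-1} with v(0)=0, v > 0 for r > 0. If α/n ≤ 1/2 then any positive solution on (0,R) with bounded initial data extends to all r > 0 (i.e. v does not blow up in finite r). -/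
/-!
Since the right-hand side is positive, `v` increases, so `v ≥ v r₀ > 0` on the interval. In the
subcritical regime the exponent of `1 + v²` is at most `n / 2`, hence
`(1 + v²) ^ p ≤ (1 + v) ^ n ≤ ((1 + 1 / v r₀) v) ^ n`, and the equation gives the linear growth
bound `v' ≤ K v`. Grönwall's inequality then bounds `v` by `v r₀ · exp (K (R - r₀))`.
-/

open Set Real

lemma translator_exponent_le_half {n α : ℝ} (hn : 0 < n) (hα : 0 < α) (hsub : α / n ≤ 1 / 2) :
    (n + 2) / 2 - n / (2 * α) ≤ n / 2 := by
  have h2α : 2 * α ≤ n := by rw [div_le_iff₀ hn] at hsub; linarith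
  have : 1 ≤ n / (2 * α) := by rwa [le_div_iff₀ (by positivity), one_mul]
  linarith

lemma one_add_sq_rpow_le_one_add_pow {w p : ℝ} {m : ℕ} (hw : 0 ≤ w) (hp : p ≤ m / 2) :
    (1 + w ^ 2) ^ p ≤ (1 + w) ^ m :=
  calc (1 + w ^ 2) ^ p ≤ (1 + w ^ 2) ^ ((m : ℝ) / 2) :=
        rpow_le_rpow_of_exponent_le (by nlinarith) hp
    _ ≤ ((1 + w) ^ 2) ^ ((m : ℝ) / 2) := by gcongr; nlinarith
    _ = (1 + w) ^ m := by
        rw [← rpow_natCast_mul (by positivity), Nat.cast_ofNat, mul_div_cancel₀ _ two_ne_zero,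
          rpow_natCast]

lemma translator_rhs_le {n : ℕ} (hn : 1 ≤ n) {p t R a w : ℝ} (hp : p ≤ n / 2)
    (ht : 0 ≤ t) (htR : t ≤ R) (ha : 0 < a) (haw : a ≤ w) :
    t ^ (n - 1) * (1 + w ^ 2) ^ p / w ^ (n - 1) ≤ R ^ (n - 1) * (1 + 1 / a) ^ n * w := by
  have hw : 0 < w := ha.trans_le haw
  have hR : 0 ≤ R := ht.trans htR
  have hlin : 1 + w ≤ (1 + 1 / a) * w := by
    have : 1 ≤ w / a := (one_le_div ha).mpr haw
    rw [add_mul, one_mul, one_div_mul_eq_div]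
    linarith
  calc t ^ (n - 1) * (1 + w ^ 2) ^ p / w ^ (n - 1)
      ≤ R ^ (n - 1) * ((1 + 1 / a) * w) ^ n / w ^ (n - 1) := by
        have hnum : (1 + w ^ 2) ^ p ≤ ((1 + 1 / a) * w) ^ n :=
          (one_add_sq_rpow_le_one_add_pow hw.le hp).trans (by gcongr)
        gcongr
    _ = R ^ (n - 1) * (1 + 1 / a) ^ n * w := by
        rw [mul_pow, ← Nat.sub_add_cancel hn, pow_succ w]
        field_simp
        rw [Nat.sub_add_cancel hn]

lemma monotoneOn_Ico_of_hasDerivAt_nonneg {f f' : ℝ → ℝ} {a b : ℝ}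
    (hf : ∀ x ∈ Ico a b, HasDerivAt f (f' x) x) (hf' : ∀ x ∈ Ico a b, 0 ≤ f' x) :
    MonotoneOn f (Ico a b) := by
  have hint : interior (Ico a b) ⊆ Ico a b := interior_subset
  exact monotoneOn_of_hasDerivWithinAt_nonneg (convex_Ico a b)
    (fun x hx => (hf x hx).continuousAt.continuousWithinAt)
    (fun x hx => (hf x (hint hx)).hasDerivWithinAt) (fun x hx => hf' x (hint hx))

lemma norm_le_mul_exp_of_norm_deriv_le_mul {E : Type*} [NormedAddCommGroup E] [NormedSpace ℝ E]
    {f f' : ℝ → E} {a b K : ℝ} (hK : 0 ≤ K) (hf : ∀ x ∈ Ico a b, HasDerivAt f (f' x) x)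
    (hbound : ∀ x ∈ Ico a b, ‖f' x‖ ≤ K * ‖f x‖) :
    ∀ x ∈ Ico a b, ‖f x‖ ≤ ‖f a‖ * exp (K * (b - a)) := by
  intro x hx
  have hsub : Icc a x ⊆ Ico a b := fun t ht => ⟨ht.1, ht.2.trans_lt hx.2⟩
  have hgron := norm_le_gronwallBound_of_norm_deriv_right_le (ε := 0)
    (fun t ht => (hf t (hsub ht)).continuousAt.continuousWithinAt)
    (fun t ht => (hf t (hsub (Ico_subset_Icc_self ht))).hasDerivWithinAt) le_rfl
    (fun t ht => by simpa using hbound t (hsub (Ico_subset_Icc_self ht))) x ⟨hx.1, le_rfl⟩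
  rw [gronwallBound_ε0] at hgron
  refine hgron.trans ?_
  gcongr
  exact hx.2.le

/-- Subcritical Gauss curvature power flows (α/n ≤ 1/2): positive solutions of the
translator ODE stay bounded on bounded intervals (no finite-r blow-up). -/
theorem stmt10 (n : ℕ) (hn : 1 ≤ n) (α : ℝ) (hα : 0 < α) (hsub : α / n ≤ 1 / 2)
    (r₀ R : ℝ) (hr₀ : 0 < r₀) (hR : r₀ < R) (v : ℝ → ℝ)
    (hpos : ∀ r ∈ Set.Ico r₀ R, 0 < v r)
    (hode : ∀ r ∈ Set.Ico r₀ R,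
      HasDerivAt v
        (r ^ (n - 1) * (1 + (v r) ^ 2) ^ (((n : ℝ) + 2) / 2 - (n : ℝ) / (2 * α)) /
          (v r) ^ (n - 1)) r) :
    BddAbove (v '' Set.Ico r₀ R) := by
  refine ⟨‖v r₀‖ * exp (R ^ (n - 1) * (1 + 1 / v r₀) ^ n * (R - r₀)), ?_⟩
  have hr₀mem : r₀ ∈ Ico r₀ R := ⟨le_rfl, hR⟩
  have hmono : MonotoneOn v (Ico r₀ R) := monotoneOn_Ico_of_hasDerivAt_nonneg hode
    fun r hr => by have := hpos r hr; have := hr₀.trans_le hr.1; positivity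
  have hp := translator_exponent_le_half (by exact_mod_cast hn) hα hsub
  have hK : 0 ≤ R ^ (n - 1) * (1 + 1 / v r₀) ^ n := by
    have := hpos r₀ hr₀mem; have := hr₀.trans hR; positivity
  have hgrowth := norm_le_mul_exp_of_norm_deriv_le_mul hK hode fun r hr => by
    have hr_pos := hr₀.trans_le hr.1
    have hv_pos := hpos r hr
    have hrhs_nonneg : 0 ≤ r ^ (n - 1) * (1 + v r ^ 2) ^ ((n + 2 : ℝ) / 2 - n / (2 * α)) /
        v r ^ (n - 1) := by positivity
    rw [norm_of_nonneg hrhs_nonneg, norm_of_nonneg hv_pos.le]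
    exact translator_rhs_le hn hp hr_pos.le hr.2.le (hpos r₀ hr₀mem) (hmono hr₀mem hr hr.1)
  rintro _ ⟨r, hr, rfl⟩
  exact (le_abs_self _).trans (hgrowth r hr)
end

section
/- Let n ≥ 1 and α/n > 1/2. Any solution v > 0 of the Gauss curvature power translator ODE v' = r^{n-1}(1+v²)^{(n+2)/2 - n/(2α)}/v^{n-1} with v(r₀) = v₀ > 0 blows up in finite r: there exists R < ∞ such that v(r) → ∞ as r → R⁻. -/
/-!
With `θ = 3 - n/α > 1`, the right-hand side of the translator ODE is at least `r₀^(n-1) v^θ`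
for `r ≥ r₀`. Hence `w = v^(1-θ)` satisfies `w' ≤ -(θ - 1) r₀^(n-1) < 0`, so `w` decreases at
least linearly and must become nonpositive, which is impossible for a positive `v`. This is the
comparison with the explicit solution `x = ((θ - 1)(R - r))^(-1/(θ-1))` of `x' = x^θ`.
-/

open Set

theorem exists_nonpos_of_hasDerivAt_le_neg {w w' : ℝ → ℝ} {r₀ k : ℝ} (hk : 0 < k)
    (hw : ∀ r ∈ Ici r₀, HasDerivAt w (w' r) r) (hle : ∀ r ∈ Ici r₀, w' r ≤ -k) :
    ∃ r ∈ Ici r₀, w r ≤ 0 := by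
  have hr : r₀ ≤ r₀ + |w r₀| / k := le_add_of_nonneg_right (by positivity)
  refine ⟨r₀ + |w r₀| / k, hr, ?_⟩
  have hdrop : w (r₀ + |w r₀| / k) - w r₀ ≤ -k * (r₀ + |w r₀| / k - r₀) := by
    refine (convex_Ici r₀).image_sub_le_mul_sub_of_deriv_le
      (fun r hr => (hw r hr).continuousAt.continuousWithinAt)
      (fun r hr => (hw r (interior_subset hr)).differentiableAt.differentiableWithinAt)
      (fun r hr => ?_) r₀ self_mem_Ici _ hr hr
    rw [(hw r (interior_subset hr)).deriv]
    exact hle r (interior_subset hr)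
  rw [add_sub_cancel_left, neg_mul, mul_div_cancel₀ _ hk.ne'] at hdrop
  linarith [le_abs_self (w r₀)]

theorem not_forall_pos_of_rpow_le_deriv {v v' : ℝ → ℝ} {r₀ c θ : ℝ} (hc : 0 < c) (hθ : 1 < θ)
    (hv : ∀ r ∈ Ici r₀, HasDerivAt v (v' r) r) (hge : ∀ r ∈ Ici r₀, c * v r ^ θ ≤ v' r) :
    ¬ ∀ r ∈ Ici r₀, 0 < v r := by
  intro hpos
  have hw : ∀ r ∈ Ici r₀,
      HasDerivAt (fun r => v r ^ (1 - θ)) (v' r * (1 - θ) * v r ^ (1 - θ - 1)) r :=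
    fun r hr => (hv r hr).rpow_const (Or.inl (hpos r hr).ne')
  have hle : ∀ r ∈ Ici r₀, v' r * (1 - θ) * v r ^ (1 - θ - 1) ≤ -(c * (θ - 1)) := by
    intro r hr
    have hvr := hpos r hr
    have hfactor : (1 - θ) * v r ^ (1 - θ - 1) ≤ 0 :=
      mul_nonpos_of_nonpos_of_nonneg (by linarith) (Real.rpow_nonneg hvr.le _)
    calc v' r * (1 - θ) * v r ^ (1 - θ - 1)
        = v' r * ((1 - θ) * v r ^ (1 - θ - 1)) := by ring
      _ ≤ c * v r ^ θ * ((1 - θ) * v r ^ (1 - θ - 1)) :=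
          mul_le_mul_of_nonpos_right (hge r hr) hfactor
      _ = c * (1 - θ) * v r ^ (θ + (1 - θ - 1)) := by rw [Real.rpow_add hvr]; ring
      _ = -(c * (θ - 1)) := by norm_num; ring
  obtain ⟨r, hr, hwr⟩ := exists_nonpos_of_hasDerivAt_le_neg (by nlinarith) hw hle
  exact (Real.rpow_pos_of_pos (hpos r hr) _).not_ge hwr

theorem pow_mul_rpow_two_mul_sub_le {r₀ r x p : ℝ} (m : ℕ) (hr₀ : 0 < r₀) (hr : r₀ ≤ r)
    (hx : 0 < x) (hp : 0 ≤ p) :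
    r₀ ^ m * x ^ (2 * p - m) ≤ r ^ m * (1 + x ^ 2) ^ p / x ^ m := by
  have hsplit : x ^ (2 * p - m) = (x ^ 2) ^ p / x ^ m := by
    rw [Real.rpow_sub hx, Real.rpow_natCast, Real.rpow_mul hx.le, Real.rpow_two]
  have hr_pos : 0 < r := hr₀.trans_le hr
  rw [hsplit, ← mul_div_assoc]
  gcongr
  linarith

theorem stmt11_general (n : ℕ) (α : ℝ) (hα : 1 / 2 < α / n)
    (r₀ : ℝ) (hr₀ : 0 < r₀) (v : ℝ → ℝ)
    (hpos : ∀ r ∈ Set.Ici r₀, 0 < v r)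
    (hode : ∀ r ∈ Set.Ici r₀,
      HasDerivAt v
        (r ^ (n - 1) * (1 + (v r) ^ 2) ^ (((n : ℝ) + 2) / 2 - (n : ℝ) / (2 * α)) /
          (v r) ^ (n - 1)) r) :
    False := by
  set p := ((n : ℝ) + 2) / 2 - (n : ℝ) / (2 * α) with hp
  have hn : 1 ≤ n := Nat.pos_of_ne_zero (by rintro rfl; norm_num at hα)
  have hn₀ : (0 : ℝ) < n := by exact_mod_cast hn
  have hα₀ : n < 2 * α := by rwa [lt_div_iff₀ hn₀, one_div_mul_eq_div, div_lt_iff₀' two_pos] at hα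
  have hn_α : (n : ℝ) / (2 * α) < 1 := (div_lt_one (by linarith)).mpr hα₀
  have hθ : 1 < 2 * p - ((n - 1 : ℕ) : ℝ) := by
    rw [Nat.cast_sub hn, Nat.cast_one, hp]
    linarith
  have hp₀ : 0 ≤ p := by rw [hp]; linarith
  exact not_forall_pos_of_rpow_le_deriv (pow_pos hr₀ (n - 1)) hθ hode
    (fun r hr => pow_mul_rpow_two_mul_sub_le (n - 1) hr₀ hr (hpos r hr) hp₀) hpos

/-- Supercritical Gauss curvature power flows (α/n > 1/2): positive solutions of the
translator ODE blow up in finite r, i.e. no global positive solution exists. -/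
theorem stmt11 (n : ℕ) (hn : 1 ≤ n) (α : ℝ) (hα : 1 / 2 < α / n)
    (r₀ v₀ : ℝ) (hr₀ : 0 < r₀) (hv₀ : 0 < v₀) (v : ℝ → ℝ) (hv0 : v r₀ = v₀)
    (hpos : ∀ r ∈ Set.Ici r₀, 0 < v r)
    (hode : ∀ r ∈ Set.Ici r₀,
      HasDerivAt v
        (r ^ (n - 1) * (1 + (v r) ^ 2) ^ (((n : ℝ) + 2) / 2 - (n : ℝ) / (2 * α)) /
          (v r) ^ (n - 1)) r) :
    False :=
  stmt11_general n α hα r₀ hr₀ v hpos hode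
end

section
/- Let β < 1/2, γ > 0, and let g : D → [0,∞) be decreasing with g(γ,1) = γ. Define w : (0,∞) → (0,∞) implicitly by w/(r(1+w²)^β) = γ. Then w is a (weak) subsolution of the translator ODE: w'(r) ≤ (1+w²)^{1+β} g(w/(r(1+w²)^β), 1) for all r > 0. -/
/-!
Differentiating the defining relation `w r = γ r (1 + w r²)^β` gives
`w' = γ (1 + w²)^(1+β) / (1 + (1 - 2β) w²)`. For `β < 1/2` the denominator is at least `1`,
and along `w` the argument of `g` is identically `γ`, where `g γ = γ`.
-/

open Real

lemma hasDerivAt_div_one_add_sq_rpow (β x : ℝ) :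
    HasDerivAt (fun y : ℝ => y / (1 + y ^ 2) ^ β)
      ((1 + (1 - 2 * β) * x ^ 2) / (1 + x ^ 2) ^ (1 + β)) x := by
  have hpos : 0 < 1 + x ^ 2 := by positivity
  have hsq : HasDerivAt (fun y : ℝ => 1 + y ^ 2) (2 * x) x := by
    simpa using (hasDerivAt_pow 2 x).const_add 1
  have hpow := (hasDerivAt_rpow_const (p := β) (Or.inl hpos.ne')).comp x hsq
  refine ((hasDerivAt_id x).div hpow (rpow_pos_of_pos hpos β).ne').congr_deriv ?_
  simp only [Function.comp_apply, id, rpow_sub hpos, rpow_add hpos, rpow_one]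
  field_simp
  ring

lemma hasDerivAt_implicit_solution_eq {β γ r d : ℝ} {w : ℝ → ℝ} (hr : 0 < r)
    (hw : ∀ r > (0 : ℝ), w r / (r * (1 + (w r) ^ 2) ^ β) = γ) (hd : HasDerivAt w d r) :
    (1 + (1 - 2 * β) * w r ^ 2) / (1 + w r ^ 2) ^ (1 + β) * d = γ := by
  have hlin : (fun s => w s / (1 + w s ^ 2) ^ β) =ᶠ[nhds r] fun s => γ * s := by
    filter_upwards [Ioi_mem_nhds hr] with s hs
    have hpow : 0 < (1 + w s ^ 2) ^ β := rpow_pos_of_pos (by positivity) β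
    rw [← hw s hs]
    field_simp [(show (0 : ℝ) < s from hs).ne']
  have hγ : HasDerivAt (fun s => w s / (1 + w s ^ 2) ^ β) γ r := by
    simpa using ((hasDerivAt_id r).const_mul γ).congr_of_eventuallyEq hlin
  exact ((hasDerivAt_div_one_add_sq_rpow β (w r)).comp r hd).unique hγ

theorem stmt14_general (β γ : ℝ) (hβ : β < 1 / 2) (hγ : 0 < γ)
    (g : ℝ → ℝ)
    (hgγ : g γ = γ) (w : ℝ → ℝ)
    (hw : ∀ r > (0 : ℝ), 0 < w r ∧ w r / (r * (1 + (w r) ^ 2) ^ β) = γ) :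
    ∀ r > (0 : ℝ), ∀ d : ℝ, HasDerivAt w d r →
      d ≤ (1 + (w r) ^ 2) ^ (1 + β) * g (w r / (r * (1 + (w r) ^ 2) ^ β)) := by
  intro r hr d hd
  have hderiv := hasDerivAt_implicit_solution_eq hr (fun s hs => (hw s hs).2) hd
  rw [(hw r hr).2, hgγ]
  have hden : 1 ≤ 1 + (1 - 2 * β) * w r ^ 2 := by nlinarith [sq_nonneg (w r)]
  have hd_eq : d = γ * (1 + w r ^ 2) ^ (1 + β) / (1 + (1 - 2 * β) * w r ^ 2) := by
    rw [eq_div_iff (by linarith), ← hderiv]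
    field_simp
  calc d ≤ γ * (1 + w r ^ 2) ^ (1 + β) := hd_eq ▸ div_le_self (by positivity) hden
    _ = (1 + w r ^ 2) ^ (1 + β) * γ := mul_comm _ _

/-- The function w defined implicitly by w/(r(1+w²)^β) = γ is a weak subsolution of
the translator ODE v' = (1+v²)^{1+β} g(v/(r(1+v²)^β), 1). -/
theorem stmt14 (β γ : ℝ) (hβ : β < 1 / 2) (hγ : 0 < γ)
    (g : ℝ → ℝ) (hganti : AntitoneOn g (Set.Ioi 0)) (hgnn : ∀ x > (0 : ℝ), 0 ≤ g x)
    (hgγ : g γ = γ) (w : ℝ → ℝ)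
    (hw : ∀ r > (0 : ℝ), 0 < w r ∧ w r / (r * (1 + (w r) ^ 2) ^ β) = γ) :
    ∀ r > (0 : ℝ), ∀ d : ℝ, HasDerivAt w d r →
      d ≤ (1 + (w r) ^ 2) ^ (1 + β) * g (w r / (r * (1 + (w r) ^ 2) ^ β)) :=
  stmt14_general β γ hβ hγ g hgγ w hw
end

section
/- Let f be an admissible α-homogeneous speed with f(0, e) = L₀ > 0 (nondegenerate), and set γ₊ = L₀^{-1/α}, β = 1/2 - 1/(2α). The function v₊ defined by v₊/(r(1+v₊²)^β) = γ₊ is a strict supersolution of the translator ODE v' = (1+v²)^{1+β} g(v/(r(1+v²)^β), 1) for r > 0, since g(γ₊, 1) = 0 and v₊' > 0. -/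
open Filter Topology

theorem hasDerivAt_mul_one_add_sq_rpow_neg (β x : ℝ) :
    HasDerivAt (fun y => y * (1 + y ^ 2) ^ (-β))
      ((1 + (1 - 2 * β) * x ^ 2) * (1 + x ^ 2) ^ (-β - 1)) x := by
  have hA : 1 + x ^ 2 ≠ 0 := by positivity
  have hpow : HasDerivAt (fun y => (1 + y ^ 2) ^ (-β))
      (-(2 * x * β * (1 + x ^ 2) ^ (-β - 1))) x := by
    simpa using ((hasDerivAt_pow 2 x).const_add 1).rpow_const (p := -β) (Or.inl hA)
  have hsplit : (1 + x ^ 2) ^ (-β) = (1 + x ^ 2) ^ (-β - 1) * (1 + x ^ 2) := by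
    rw [← Real.rpow_add_one hA]; ring_nf
  refine ((hasDerivAt_id' x).mul hpow).congr_deriv ?_
  rw [hsplit]
  ring

theorem one_add_mul_sq_mul_rpow_pos {β : ℝ} (hβ : β ≤ 1 / 2) (x : ℝ) :
    0 < (1 + (1 - 2 * β) * x ^ 2) * (1 + x ^ 2) ^ (-β - 1) := by
  have : 0 ≤ (1 - 2 * β) * x ^ 2 := mul_nonneg (by linarith) (sq_nonneg x)
  positivity

/-- Implicit differentiation: `v / (1 + v²)^β` grows linearly in `r`, and for `β ≤ 1/2` the map
`v ↦ v / (1 + v²)^β` is strictly increasing, so `v` itself increases. -/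
theorem HasDerivAt.pos_of_div_one_add_sq_rpow_eq_mul {β γ r d : ℝ} {v : ℝ → ℝ}
    (hβ : β ≤ 1 / 2) (hγ : 0 < γ) (hv : ∀ᶠ s in 𝓝 r, v s / (1 + v s ^ 2) ^ β = γ * s)
    (hd : HasDerivAt v d r) : 0 < d := by
  have hcomp := (hasDerivAt_mul_one_add_sq_rpow_neg β (v r)).comp r hd
  have hlin : HasDerivAt (fun y => γ * y) γ r := by simpa using (hasDerivAt_id r).const_mul γ
  have heq : (fun s => v s * (1 + v s ^ 2) ^ (-β)) =ᶠ[𝓝 r] fun s => γ * s := by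
    filter_upwards [hv] with s hs
    rw [Real.rpow_neg (by positivity), ← div_eq_mul_inv, hs]
  have hγd := (hcomp.congr_of_eventuallyEq heq.symm).unique hlin
  exact pos_of_mul_pos_right (hγd ▸ hγ) (one_add_mul_sq_mul_rpow_pos hβ (v r)).le

theorem stmt15_general (α : ℝ) (hα : 0 < α)
    (β γp : ℝ) (hβ : β = 1 / 2 - 1 / (2 * α))
    (g : ℝ → ℝ) (hg : g γp = 0) (vp : ℝ → ℝ)
    (hvp : ∀ r > (0 : ℝ), 0 < vp r ∧ vp r / (r * (1 + (vp r) ^ 2) ^ β) = γp) :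
    ∀ r > (0 : ℝ), ∀ d : ℝ, HasDerivAt vp d r →
      (1 + (vp r) ^ 2) ^ (1 + β) * g (vp r / (r * (1 + (vp r) ^ 2) ^ β)) < d := by
  intro r hr d hd
  obtain ⟨hvr, hrel⟩ := hvp r hr
  rw [hrel, hg, mul_zero]
  have hβ' : β ≤ 1 / 2 := by
    rw [hβ]
    linarith [show 0 < 1 / (2 * α) by positivity]
  have hγ : 0 < γp := hrel ▸ by positivity
  refine hd.pos_of_div_one_add_sq_rpow_eq_mul hβ' hγ ?_
  filter_upwards [Ioi_mem_nhds hr] with s hs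
  have hs : 0 < s := hs
  rw [← (hvp s hs).2]
  field_simp

/-- In the nondegenerate case, v₊ defined by v₊/(r(1+v₊²)^β) = γ₊ = f(0,e)^{-1/α}
is a strict supersolution of the translator ODE, since g(γ₊,1) = 0 and v₊' > 0. -/
theorem stmt15 (α L₀ : ℝ) (hα : 0 < α) (hL₀ : 0 < L₀)
    (β γp : ℝ) (hβ : β = 1 / 2 - 1 / (2 * α)) (hγp : γp = L₀ ^ (-(1 / α)))
    (g : ℝ → ℝ) (hg : g γp = 0) (vp : ℝ → ℝ)
    (hvp : ∀ r > (0 : ℝ), 0 < vp r ∧ vp r / (r * (1 + (vp r) ^ 2) ^ β) = γp) :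
    ∀ r > (0 : ℝ), ∀ d : ℝ, HasDerivAt vp d r →
      (1 + (vp r) ^ 2) ^ (1 + β) * g (vp r / (r * (1 + (vp r) ^ 2) ^ β)) < d :=
  stmt15_general α hα β γp hβ g hg vp hvp
end
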